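/- In the three-state counterexample gambling game with J = [0,1/4], min I = 0 and max I = 1/4, write x_λ = v_λ(a,a') and y_λ = v_λ(a,b'). If λ_n → 0 is a sequence of discount factors such that x_{λ_n} and y_{λ_n} both converge to some v ∈ [0,1], then v ≤ 1/2 and y_{λ_n} − x_{λ_n} is asymptotically equivalent to 2√(λ_n)·(1−v) as n → ∞ (i.e. (y_{λ_n} − x_{λ_n})/(2√(λ_n)) → 1−v). -/

import Mathlib

open MeasureTheory Set Filter Topology

noncomputable section
namespace GG

abbrev PM (S : Type*) [MeasurableSpace S] := MeasureTheory.ProbabilityMeasure S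

variable {S : Type*} [MeasurableSpace S]

/-- Dirac probability measure. -/
def dirac (s : S) : PM S := ⟨MeasureTheory.Measure.dirac s, inferInstance⟩

/-- Integral of a function against a probability measure (the affine extension `f̃`). -/
def iPM (f : S → ℝ) (p : PM S) : ℝ := ∫ s, f s ∂(p : MeasureTheory.Measure S)

/-- `r` is the mixture `t p + (1-t) q`. -/
def IsMix (t : NNReal) (p q r : PM S) : Prop :=
  (r : MeasureTheory.Measure S)
    = (t : ENNReal) • (p : MeasureTheory.Measure S)
      + ((1 : ENNReal) - (t : ENNReal)) • (q : MeasureTheory.Measure S)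

/-- Convexity of a set of probability measures. -/
def PMConvex (A : Set (PM S)) : Prop :=
  ∀ p ∈ A, ∀ q ∈ A, ∀ t : NNReal, t ≤ 1 → ∀ r : PM S, IsMix t p q r → r ∈ A

/-- Convexity of a set of pairs of probability measures. -/
def PMConvex2 (A : Set (PM S × PM S)) : Prop :=
  ∀ a ∈ A, ∀ b ∈ A, ∀ t : NNReal, t ≤ 1 → ∀ c : PM S × PM S,
    IsMix t a.1 b.1 c.1 → IsMix t a.2 b.2 c.2 → c ∈ A

/-- Convex hull of a set of probability measures. -/
def convexHullPM (A : Set (PM S)) : Set (PM S) := ⋂₀ {T | A ⊆ T ∧ PMConvex T}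

/-- Convex hull of a set of pairs of probability measures. -/
def convexHull2 (A : Set (PM S × PM S)) : Set (PM S × PM S) := ⋂₀ {T | A ⊆ T ∧ PMConvex2 T}

/-- Kantorovich–Rubinstein distance. -/
def dKR {S : Type*} [MeasurableSpace S] [PseudoMetricSpace S] (p q : PM S) : ℝ :=
  sSup {r | ∃ f : S → ℝ, LipschitzWith 1 f ∧ r = |iPM f p - iPM f q|}

def argmaxOn {α : Type*} (f : α → ℝ) (A : Set α) : Set α := {p ∈ A | ∀ q ∈ A, f q ≤ f p}

def argminOn {α : Type*} (f : α → ℝ) (A : Set α) : Set α := {p ∈ A | ∀ q ∈ A, f p ≤ f q}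

section Topo

variable [TopologicalSpace S] [OpensMeasurableSpace S]

/-- Graph of the linear extension `Γ̃`: the closed convex hull of the graph of `Γ`. -/
def tGraph (Γ : S → Set (PM S)) : Set (PM S × PM S) :=
  closure (convexHull2 {z | ∃ x : S, z.1 = dirac x ∧ z.2 ∈ Γ x})

/-- The linear extension `Γ̃ : Δ(S) ⇉ Δ(S)`. -/
def tStep (Γ : S → Set (PM S)) (p : PM S) : Set (PM S) := {q | (p, q) ∈ tGraph Γ}

/-- Iterates `Γ̃ⁿ`, with `Γ̃⁰(p) = {p}` and `Γ̃^{n+1} = Γ̃ⁿ ∘ Γ̃`. -/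
def tIter (Γ : S → Set (PM S)) : ℕ → PM S → Set (PM S)
  | 0, p => {p}
  | n + 1, p => {r | ∃ q ∈ tStep Γ p, r ∈ tIter Γ n q}

/-- The reachable set `Γ^∞(x)`: closure of `⋃ₙ Γ̃ⁿ(δ_x)`. -/
def reach (Γ : S → Set (PM S)) (x : S) : Set (PM S) :=
  closure (⋃ n : ℕ, tIter Γ n (dirac x))

/-- There is a bounded measurable lower semicontinuous `φ` whose (expectation) argmax over
`R x` is exactly `{δ_x}`, for every `x`. -/
def AcyclicFor (R : S → Set (PM S)) : Prop :=
  ∃ φ : S → ℝ, Measurable φ ∧ (∃ C : ℝ, ∀ s, |φ s| ≤ C) ∧ LowerSemicontinuous φ ∧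
    ∀ x : S, argmaxOn (iPM φ) (R x) = {dirac x}

/-- There is a bounded measurable upper semicontinuous `ψ` whose (expectation) argmin over
`R y` is exactly `{δ_y}`, for every `y`. -/
def AcyclicForMin (R : S → Set (PM S)) : Prop :=
  ∃ ψ : S → ℝ, Measurable ψ ∧ (∃ C : ℝ, ∀ s, |ψ s| ≤ C) ∧ UpperSemicontinuous ψ ∧
    ∀ y : S, argminOn (iPM ψ) (R y) = {dirac y}

end Topo

section TwoPlayers

variable {X Y : Type*} [MeasurableSpace X] [MeasurableSpace Y]

/-- The bi-affine extension `ṽ(p,q) = ∫∫ v dp dq`. -/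
def iXY (v : X × Y → ℝ) (p : PM X) (q : PM Y) : ℝ :=
  ∫ x, ∫ y, v (x, y) ∂(q : MeasureTheory.Measure Y) ∂(p : MeasureTheory.Measure X)

/-- `v` is excessive: `v(x,y) = max_{p ∈ Γ(x)} ṽ(p,y)`. -/
def Excessive (Γ : X → Set (PM X)) (v : X × Y → ℝ) : Prop :=
  ∀ x : X, ∀ y : Y, IsGreatest ((fun p => iXY v p (dirac y)) '' Γ x) (v (x, y))

/-- `v` is depressive: `v(x,y) = min_{q ∈ Λ(y)} ṽ(x,q)`. -/
def Depressive (Λ : Y → Set (PM Y)) (v : X × Y → ℝ) : Prop :=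
  ∀ x : X, ∀ y : Y, IsLeast ((fun q => iXY v (dirac x) q) '' Λ y) (v (x, y))

/-- `v` is balanced: `v(x,y) = max_{p ∈ Γ(x)} min_{q ∈ Λ(y)} ṽ(p,q)
    = min_{q ∈ Λ(y)} max_{p ∈ Γ(x)} ṽ(p,q)`. -/
def Balanced (Γ : X → Set (PM X)) (Λ : Y → Set (PM Y)) (v : X × Y → ℝ) : Prop :=
  ∀ x : X, ∀ y : Y,
    IsGreatest {r | ∃ p ∈ Γ x, IsLeast (iXY v p '' Λ y) r} (v (x, y)) ∧
    IsLeast {r | ∃ q ∈ Λ y, IsGreatest ((fun p => iXY v p q) '' Γ x) r} (v (x, y))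

variable [TopologicalSpace X] [OpensMeasurableSpace X] [TopologicalSpace Y] [OpensMeasurableSpace Y]

/-- Property P1: for all `(x,y)` there is `p ∈ Γ^∞(x)` with `v(x,y) = ṽ(p,y) ≤ ũ(p,y)`. -/
def P1 (Γ : X → Set (PM X)) (u v : X × Y → ℝ) : Prop :=
  ∀ x : X, ∀ y : Y, ∃ p ∈ reach Γ x,
    v (x, y) = iXY v p (dirac y) ∧ iXY v p (dirac y) ≤ iXY u p (dirac y)

/-- Property P2: for all `(x,y)` there is `q ∈ Λ^∞(y)` with `v(x,y) = ṽ(x,q) ≥ ũ(x,q)`. -/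
def P2 (Λ : Y → Set (PM Y)) (u v : X × Y → ℝ) : Prop :=
  ∀ x : X, ∀ y : Y, ∃ q ∈ reach Λ y,
    v (x, y) = iXY v (dirac x) q ∧ iXY u (dirac x) q ≤ iXY v (dirac x) q

/-- `w` satisfies the Shapley fixed point equation for discount factor `lam`:
`w(x,y) = max_{p∈Γ(x)} min_{q∈Λ(y)} (λ u(x,y) + (1-λ) w̃(p,q))
        = min_{q∈Λ(y)} max_{p∈Γ(x)} (λ u(x,y) + (1-λ) w̃(p,q))`. -/
def ShapleyEq (Γ : X → Set (PM X)) (Λ : Y → Set (PM Y)) (u : X × Y → ℝ)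
    (lam : ℝ) (w : X × Y → ℝ) : Prop :=
  ∀ x : X, ∀ y : Y,
    IsGreatest {r | ∃ p ∈ Γ x,
      IsLeast ((fun q => lam * u (x, y) + (1 - lam) * iXY w p q) '' Λ y) r} (w (x, y)) ∧
    IsLeast {r | ∃ q ∈ Λ y,
      IsGreatest ((fun p => lam * u (x, y) + (1 - lam) * iXY w p q) '' Γ x) r} (w (x, y))

end TwoPlayers

/-- A standard gambling game: compact metric state spaces, continuous payoff,
continuous transition multifunctions with nonempty convex compact values,
leavable and non expansive. -/
structure StdGame (X Y : Type*) [MetricSpace X] [MeasurableSpace X] [OpensMeasurableSpace X]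
    [MetricSpace Y] [MeasurableSpace Y] [OpensMeasurableSpace Y] where
  G : X → Set (PM X)
  L : Y → Set (PM Y)
  u : X × Y → ℝ
  u_cont : Continuous u
  G_ne : ∀ x, (G x).Nonempty
  G_cvx : ∀ x, PMConvex (G x)
  G_cpt : ∀ x, IsCompact (G x)
  G_cont : ∀ ε : ℝ, 0 < ε → ∃ α : ℝ, 0 < α ∧ ∀ x x' : X, dist x x' ≤ α →
    ∀ p ∈ G x, ∃ p' ∈ G x', dKR p p' ≤ ε
  G_leav : ∀ x, dirac x ∈ G x
  G_nonexp : ∀ x x' : X, ∀ p ∈ G x, ∃ p' ∈ G x', dKR p p' ≤ dist x x'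
  L_ne : ∀ y, (L y).Nonempty
  L_cvx : ∀ y, PMConvex (L y)
  L_cpt : ∀ y, IsCompact (L y)
  L_cont : ∀ ε : ℝ, 0 < ε → ∃ α : ℝ, 0 < α ∧ ∀ y y' : Y, dist y y' ≤ α →
    ∀ q ∈ L y, ∃ q' ∈ L y', dKR q q' ≤ ε
  L_leav : ∀ y, dirac y ∈ L y
  L_nonexp : ∀ y y' : Y, ∀ q ∈ L y, ∃ q' ∈ L y', dKR q q' ≤ dist y y'

end GG

namespace GG

/-! The three-state counterexample gambling game. -/

/-- Three states a, b, c (Player 2 uses the primed copy a', b', c' of the same type). -/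
inductive St : Type
  | a | b | c
deriving DecidableEq

instance instFintypeSt : Fintype St :=
  ⟨{St.a, St.b, St.c}, fun x => by cases x <;> simp⟩

instance : TopologicalSpace St := ⊥
instance : DiscreteTopology St := ⟨rfl⟩
instance : MeasurableSpace St := ⊤
instance : BorelSpace St := ⟨(borel_eq_top_of_discrete (α := St)).symm⟩

/-- Generator: probability measures of the form
(1 - t - t^2) delta_x + t delta_y + t^2 delta_z for t in the parameter set I. -/
def gen (x y z : St) (I : Set ℝ) : Set (PM St) :=
  {p | ∃ t ∈ I, ((p {x} : NNReal) : ℝ) = 1 - t - t ^ 2 ∧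
    ((p {y} : NNReal) : ℝ) = t ∧ ((p {z} : NNReal) : ℝ) = t ^ 2}

/-- The transition multifunction of the counterexample, for the parameter set I:
Gam(c) = {delta_c}, Gam(a) = conv gen(a,b,c), Gam(b) = conv gen(b,a,c). -/
def Gam (I : Set ℝ) : St → Set (PM St)
  | St.a => convexHullPM (gen St.a St.b St.c I)
  | St.b => convexHullPM (gen St.b St.a St.c I)
  | St.c => {dirac St.c}

/-- The payoff: 0 on the diagonal and 1 off the diagonal. -/
def pay : St × St → ℝ := fun z => if z.1 = z.2 then 0 else 1

/-- The candidate limit value with parameter t: rows a, b equal t on columns a', b',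
equal 1 on column c'; row c identically 0. -/
def limitVal (t : ℝ) : St × St → ℝ := fun z =>
  match z with
  | (St.c, _) => 0
  | (_, St.c) => 1
  | _ => t

end GG

namespace GG

/-!
Write `x = v_λ(a,a')`, `y = v_λ(a,b')`, `z = v_λ(c,a')`. The discounted value is unique, and the
game is invariant under exchanging `a` and `b`, so `v_λ(b,b') = x`, `v_λ(b,a') = y` and
`v_λ(c,b') = z`; moreover `v_λ(a,c') = 1`, `v_λ(c,c') = 0`, and `z ≤ 16λ` since from `a'` player 2
reaches `c'` with probability `1/16` per stage.

Against player 1 staying at `a`, player 2's best move from `b'` gives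
`λ(1-y) ≤ (1-λ)(s(y-x) - s²(1-y))` for some `s`, hence `4λ(1-y)² ≤ (1-λ)(y-x)²` by AM-GM. As `z`
is small, player 1 never gains by leaving `a`, and player 2 playing `s = (y-x)/(2(1-y))` gives the
reverse inequality. So `(1-λ)(y-x)² = 4λ(1-y)²`, which is the asymptotic equivalence. Finally
player 2 staying at `a'` yields `x(x-z) ≤ (1-y)²`, whose limit `v² ≤ (1-v)²` is `v ≤ 1/2`.
-/

section FiniteSpace

variable {S : Type*} [MeasurableSpace S]

lemma iPM_const (c : ℝ) (p : PM S) : iPM (fun _ => c) p = c := by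
  simp [iPM]

lemma iPM_neg (f : S → ℝ) (p : PM S) : iPM (-f) p = -iPM f p :=
  integral_neg f

lemma iPM_dirac [MeasurableSingletonClass S] (f : S → ℝ) (s : S) : iPM f (dirac s) = f s :=
  integral_dirac f s

variable [Finite S] [MeasurableSingletonClass S]

lemma iPM_mono {f g : S → ℝ} (h : f ≤ g) (p : PM S) : iPM f p ≤ iPM g p :=
  integral_mono Integrable.of_finite Integrable.of_finite h

lemma iPM_sub (f g : S → ℝ) (p : PM S) : iPM (f - g) p = iPM f p - iPM g p :=
  integral_sub Integrable.of_finite Integrable.of_finite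

lemma iPM_of_isMix {t : NNReal} (ht : t ≤ 1) {p q r : PM S} (h : IsMix t p q r) (f : S → ℝ) :
    iPM f r = t * iPM f p + (1 - t) * iPM f q := by
  have : IsFiniteMeasure ((t : ENNReal) • (p : Measure S)) :=
    ⟨ENNReal.mul_lt_top ENNReal.coe_lt_top (measure_lt_top _ _)⟩
  have : IsFiniteMeasure (((1 : ENNReal) - t) • (q : Measure S)) :=
    ⟨ENNReal.mul_lt_top (tsub_le_self.trans_lt ENNReal.one_lt_top) (measure_lt_top _ _)⟩
  rw [iPM, h, integral_add_measure Integrable.of_finite Integrable.of_finite,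
    integral_smul_measure, integral_smul_measure,
    ENNReal.toReal_sub_of_le (by exact_mod_cast ht) ENNReal.one_ne_top]
  simp [iPM]

lemma pmConvex_setOf_iPM_le (f : S → ℝ) (M : ℝ) : PMConvex {p : PM S | iPM f p ≤ M} := by
  intro p hp q hq t ht r hr
  have ht' : (t : ℝ) ≤ 1 := by exact_mod_cast ht
  simp only [Set.mem_ofPred_eq, iPM_of_isMix ht hr] at hp hq ⊢
  nlinarith [t.coe_nonneg]

lemma iPM_map {σ : S → S} (hσ : Measurable σ) (f : S → ℝ) (p : PM S) :
    iPM f (p.map hσ.aemeasurable) = iPM (f ∘ σ) p :=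
  integral_map hσ.aemeasurable (measurable_of_finite f).aestronglyMeasurable

end FiniteSpace

section ConvexHull

variable {S : Type*} [MeasurableSpace S]

lemma subset_convexHullPM (A : Set (PM S)) : A ⊆ convexHullPM A :=
  fun _ hp _ hT => hT.1 hp

lemma convexHullPM_min {A T : Set (PM S)} (hAT : A ⊆ T) (hT : PMConvex T) :
    convexHullPM A ⊆ T :=
  fun _ hp => hp T ⟨hAT, hT⟩

lemma pmConvex_convexHullPM (A : Set (PM S)) : PMConvex (convexHullPM A) :=
  fun p hp q hq t ht r hr T hT => hT.2 p (hp T hT) q (hq T hT) t ht r hr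

lemma IsMix.map {S' : Type*} [MeasurableSpace S'] {σ : S → S'} (hσ : Measurable σ)
    {t : NNReal} {p q r : PM S} (h : IsMix t p q r) :
    IsMix t (p.map hσ.aemeasurable) (q.map hσ.aemeasurable) (r.map hσ.aemeasurable) := by
  change Measure.map σ r = _
  rw [h, Measure.map_add _ _ hσ, Measure.map_smul, Measure.map_smul]
  rfl

end ConvexHull

lemma St.sum_eq {x y z : St} (hxy : x ≠ y) (hxz : x ≠ z) (hyz : y ≠ z) (g : St → ℝ) :
    ∑ s, g s = g x + g y + g z := by
  cases x <;> cases y <;> cases z <;> simp_all [Finset.univ, Fintype.elems] <;> ring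

lemma iPM_eq_sum (f : St → ℝ) (p : PM St) : iPM f p = ∑ s, (p {s} : ℝ) * f s :=
  integral_fintype Integrable.of_finite

section Generators

variable {x y z : St} {K : Set ℝ}

lemma gen_mono {K' : Set ℝ} (h : K ⊆ K') : gen x y z K ⊆ gen x y z K' :=
  fun _ ⟨t, ht, hp⟩ => ⟨t, h ht, hp⟩

lemma dirac_mem_gen (hxy : x ≠ y) (hxz : x ≠ z) (h0 : (0 : ℝ) ∈ K) : dirac x ∈ gen x y z K :=
  ⟨0, h0, by simp [dirac, hxy, hxz]⟩

variable (hxy : x ≠ y) (hxz : x ≠ z) (hyz : y ≠ z)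
include hxy hxz hyz

lemma iPM_of_mem_gen {p : PM St} (hp : p ∈ gen x y z K) :
    ∃ t ∈ K, ∀ f, iPM f p = (1 - t - t ^ 2) * f x + t * f y + t ^ 2 * f z := by
  obtain ⟨t, ht, hx, hy, hz⟩ := hp
  exact ⟨t, ht, fun f => by rw [iPM_eq_sum, St.sum_eq hxy hxz hyz, hx, hy, hz]⟩

lemma iPM_of_mem_gen_singleton {t : ℝ} {p : PM St} (hp : p ∈ gen x y z {t}) (f : St → ℝ) :
    iPM f p = (1 - t - t ^ 2) * f x + t * f y + t ^ 2 * f z := by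
  obtain ⟨_, rfl, h⟩ := iPM_of_mem_gen hxy hxz hyz hp
  exact h f

lemma gen_singleton_nonempty {t : ℝ} (ht0 : 0 ≤ t) (ht : t ≤ 1 / 2) :
    (gen x y z {t}).Nonempty := by
  have hx : 0 ≤ 1 - t - t ^ 2 := by nlinarith
  let μ : Measure St := ENNReal.ofReal (1 - t - t ^ 2) • Measure.dirac x
    + ENNReal.ofReal t • Measure.dirac y + ENNReal.ofReal (t ^ 2) • Measure.dirac z
  have : IsProbabilityMeasure μ := ⟨by
    simp only [μ, Measure.add_apply, Measure.smul_apply, measure_univ, smul_eq_mul, mul_one]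
    rw [← ENNReal.ofReal_add hx ht0, ← ENNReal.ofReal_add (by positivity) (by positivity)]
    ring_nf
    exact ENNReal.ofReal_one⟩
  refine ⟨⟨μ, this⟩, t, rfl, ?_⟩
  simp [μ, hxy, hxz, hyz, hxy.symm, hxz.symm, hyz.symm, ENNReal.coe_toNNReal_eq_toReal,
    ENNReal.toReal_ofReal hx, ht0]

variable (hK : IsCompact K) (hK0 : K.Nonempty) (hK2 : K ⊆ Icc 0 (1 / 2))
include hK hK0 hK2

lemma exists_isMaxOn_iPM (f : St → ℝ) :
    ∃ t ∈ K, ∃ p ∈ gen x y z {t}, IsMaxOn (iPM f) (convexHullPM (gen x y z K)) p := by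
  obtain ⟨t, htK, hmax⟩ := hK.exists_isMaxOn hK0 (f := fun t => (1 - t - t ^ 2) * f x
    + t * f y + t ^ 2 * f z) (by fun_prop)
  obtain ⟨p, hp⟩ := gen_singleton_nonempty hxy hxz hyz (hK2 htK).1 (hK2 htK).2
  refine ⟨t, htK, p, hp, isMaxOn_iff.mpr fun q hq => ?_⟩
  refine convexHullPM_min (T := {q | iPM f q ≤ iPM f p}) (fun q hq => ?_)
    (pmConvex_setOf_iPM_le f _) hq
  obtain ⟨s, hs, hqf⟩ := iPM_of_mem_gen hxy hxz hyz hq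
  simpa only [Set.mem_ofPred_eq, hqf, iPM_of_mem_gen_singleton hxy hxz hyz hp] using hmax hs

lemma exists_isMinOn_iPM (f : St → ℝ) :
    ∃ t ∈ K, ∃ p ∈ gen x y z {t}, IsMinOn (iPM f) (convexHullPM (gen x y z K)) p := by
  obtain ⟨t, ht, p, hp, hmax⟩ := exists_isMaxOn_iPM hxy hxz hyz hK hK0 hK2 (-f)
  refine ⟨t, ht, p, hp, isMinOn_iff.mpr fun q hq => ?_⟩
  simpa [iPM_neg] using isMaxOn_iff.mp hmax q hq

end Generators

lemma isMaxOn_singleton {α β : Type*} [Preorder β] (f : α → β) (a : α) : IsMaxOn f {a} a :=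
  isMaxOn_iff.mpr fun _ h => (Set.mem_singleton_iff.mp h).symm ▸ le_rfl

lemma isMinOn_singleton {α β : Type*} [Preorder β] (f : α → β) (a : α) : IsMinOn f {a} a :=
  isMinOn_iff.mpr fun _ h => (Set.mem_singleton_iff.mp h).symm ▸ le_rfl

section Shapley

variable {X Y : Type*} [MeasurableSpace X] [MeasurableSpace Y] {Γ : X → Set (PM X)}
  {Λ : Y → Set (PM Y)} {u w w' : X × Y → ℝ} {lam : ℝ}

lemma iXY_const (c : ℝ) (p : PM X) (q : PM Y) : iXY (fun _ => c) p q = c := by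
  simp [iXY]

lemma iXY_dirac_left [MeasurableSingletonClass X] (v : X × Y → ℝ) (x : X) (q : PM Y) :
    iXY v (dirac x) q = iPM (fun y => v (x, y)) q :=
  iPM_dirac _ x

lemma iXY_dirac_right [MeasurableSingletonClass Y] (v : X × Y → ℝ) (p : PM X) (y : Y) :
    iXY v p (dirac y) = iPM (fun x => v (x, y)) p := by
  change iPM (fun x => iPM (fun y' => v (x, y')) (dirac y)) p = _
  simp only [iPM_dirac]

lemma iXY_dirac_dirac [MeasurableSingletonClass X] [MeasurableSingletonClass Y] (v : X × Y → ℝ)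
    (x : X) (y : Y) :
    iXY v (dirac x) (dirac y) = v (x, y) := by
  rw [iXY_dirac_left, iPM_dirac]

lemma ShapleyEq.le_of_isMaxOn (h : ShapleyEq Γ Λ u lam w) (hlam : lam ≤ 1) {x : X} {y : Y}
    {p : PM X} {q : PM Y} (hp : p ∈ Γ x) (hq : q ∈ Λ y)
    (hmax : IsMaxOn (fun p => iXY w p q) (Γ x) p) :
    w (x, y) ≤ lam * u (x, y) + (1 - lam) * iXY w p q := by
  refine (h x y).2.2 ⟨q, hq, ⟨p, hp, rfl⟩, ?_⟩
  rintro _ ⟨p', hp', rfl⟩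
  exact (add_le_add_iff_left _).mpr
    (mul_le_mul_of_nonneg_left (isMaxOn_iff.mp hmax p' hp') (sub_nonneg.mpr hlam))

lemma ShapleyEq.ge_of_isMinOn (h : ShapleyEq Γ Λ u lam w) (hlam : lam ≤ 1) {x : X} {y : Y}
    {p : PM X} {q : PM Y} (hp : p ∈ Γ x) (hq : q ∈ Λ y) (hmin : IsMinOn (iXY w p) (Λ y) q) :
    lam * u (x, y) + (1 - lam) * iXY w p q ≤ w (x, y) := by
  refine (h x y).1.2 ⟨p, hp, ⟨q, hq, rfl⟩, ?_⟩
  rintro _ ⟨q', hq', rfl⟩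
  exact (add_le_add_iff_left _).mpr
    (mul_le_mul_of_nonneg_left (isMinOn_iff.mp hmin q' hq') (sub_nonneg.mpr hlam))

lemma ShapleyEq.exists_eq (h : ShapleyEq Γ Λ u lam w) (x : X) (y : Y) :
    ∃ p ∈ Γ x, ∃ q ∈ Λ y, w (x, y) = lam * u (x, y) + (1 - lam) * iXY w p q := by
  obtain ⟨p, hp, hleast⟩ := (h x y).1.1
  obtain ⟨q, hq, he⟩ := hleast.1
  exact ⟨p, hp, q, hq, he.symm⟩

variable [Finite X] [Finite Y] [MeasurableSingletonClass X] [MeasurableSingletonClass Y]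

lemma iXY_mono (h : w ≤ w') (p : PM X) (q : PM Y) : iXY w p q ≤ iXY w' p q :=
  iPM_mono (fun x => iPM_mono (fun y => h (x, y)) q) p

lemma iXY_sub (p : PM X) (q : PM Y) : iXY (w - w') p q = iXY w p q - iXY w' p q := by
  calc iXY (w - w') p q
      = iPM ((fun x => iPM (fun y => w (x, y)) q) - fun x => iPM (fun y => w' (x, y)) q) p :=
        congrArg (iPM · p) (funext fun x => iPM_sub _ _ q)
    _ = iXY w p q - iXY w' p q := iPM_sub _ _ p

lemma iXY_map {σ : X → X} {τ : Y → Y} (hσ : Measurable σ) (hτ : Measurable τ) (p : PM X)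
    (q : PM Y) :
    iXY w (p.map hσ.aemeasurable) (q.map hτ.aemeasurable) = iXY (w ∘ Prod.map σ τ) p q := by
  change iPM (fun x => iPM (fun y => w (x, y)) _) _ = iPM (fun x => iPM (fun y => w (σ x, τ y)) q) p
  simp only [iPM_map hσ, iPM_map hτ]
  rfl

lemma ShapleyEq.le_of_forall_le (h : ShapleyEq Γ Λ u lam w) (hlam0 : 0 < lam) (hlam1 : lam ≤ 1)
    {C : ℝ} (hu : ∀ z, u z ≤ C) (z : X × Y) : w z ≤ C := by
  have : Nonempty (X × Y) := ⟨z⟩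
  obtain ⟨⟨x, y⟩, hmax⟩ := Finite.exists_max w
  obtain ⟨p, -, q, -, he⟩ := h.exists_eq x y
  have hpq : iXY w p q ≤ w (x, y) := by
    simpa only [iXY_const] using iXY_mono (w' := fun _ => w (x, y)) hmax p q
  nlinarith [hu (x, y), hmax z]

lemma ShapleyEq.ge_of_forall_ge (h : ShapleyEq Γ Λ u lam w) (hlam0 : 0 < lam) (hlam1 : lam ≤ 1)
    {C : ℝ} (hu : ∀ z, C ≤ u z) (z : X × Y) : C ≤ w z := by
  have : Nonempty (X × Y) := ⟨z⟩
  obtain ⟨⟨x, y⟩, hmin⟩ := Finite.exists_min w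
  obtain ⟨p, -, q, -, he⟩ := h.exists_eq x y
  have hpq : w (x, y) ≤ iXY w p q := by
    simpa only [iXY_const] using iXY_mono (w := fun _ => w (x, y)) hmin p q
  nlinarith [hu (x, y), hmin z]

lemma ShapleyEq.le_of_shapleyEq (h : ShapleyEq Γ Λ u lam w) (h' : ShapleyEq Γ Λ u lam w')
    (hlam0 : 0 < lam) (hlam1 : lam ≤ 1) : w ≤ w' := by
  intro z
  have : Nonempty (X × Y) := ⟨z⟩
  obtain ⟨⟨x, y⟩, hmax⟩ := Finite.exists_max (w - w')
  obtain ⟨p, hp, hleast⟩ := (h x y).1.1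
  obtain ⟨q, hq, hgreatest⟩ := (h' x y).2.1
  have h1 : w (x, y) ≤ lam * u (x, y) + (1 - lam) * iXY w p q := hleast.2 ⟨q, hq, rfl⟩
  have h2 : lam * u (x, y) + (1 - lam) * iXY w' p q ≤ w' (x, y) := hgreatest.2 ⟨p, hp, rfl⟩
  have h3 : iXY w p q - iXY w' p q ≤ w (x, y) - w' (x, y) := by
    simpa only [iXY_sub, iXY_const, Pi.sub_apply] using
      iXY_mono (w' := fun _ => (w - w') (x, y)) hmax p q
  have := hmax z
  simp only [Pi.sub_apply] at this
  nlinarith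

lemma ShapleyEq.unique (h : ShapleyEq Γ Λ u lam w) (h' : ShapleyEq Γ Λ u lam w')
    (hlam0 : 0 < lam) (hlam1 : lam ≤ 1) : w = w' :=
  le_antisymm (h.le_of_shapleyEq h' hlam0 hlam1) (h'.le_of_shapleyEq h hlam0 hlam1)

lemma ShapleyEq.comp_prodMap {σ : X → X} {τ : Y → Y} (hσ : Measurable σ) (hτ : Measurable τ)
    (hΓ : ∀ x, Γ (σ x) = (fun p => p.map hσ.aemeasurable) '' Γ x)
    (hΛ : ∀ y, Λ (τ y) = (fun q => q.map hτ.aemeasurable) '' Λ y)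
    (hu : ∀ x y, u (σ x, τ y) = u (x, y)) (h : ShapleyEq Γ Λ u lam w) :
    ShapleyEq Γ Λ u lam (w ∘ Prod.map σ τ) := by
  intro x y
  simpa only [hΓ, hΛ, hu, Set.image_image, Set.exists_mem_image, iXY_map hσ hτ, Function.comp_apply,
    Prod.map_apply] using h (σ x) (τ y)

end Shapley

def sw : St → St
  | St.a => St.b
  | St.b => St.a
  | St.c => St.c

lemma sw_involutive : Function.Involutive sw := by
  intro s; cases s <;> rfl

lemma measurable_sw : Measurable sw := measurable_from_top

def smap (p : PM St) : PM St := p.map measurable_sw.aemeasurable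

lemma smap_smap (p : PM St) : smap (smap p) = p := by
  apply Subtype.ext
  change Measure.map sw (Measure.map sw (p : Measure St)) = p
  rw [Measure.map_map measurable_sw measurable_sw, sw_involutive.comp_self, Measure.map_id]

lemma smap_dirac (s : St) : smap (dirac s) = dirac (sw s) :=
  Subtype.ext (Measure.map_dirac' measurable_sw s)

lemma smap_apply_singleton (p : PM St) (s : St) : smap p {sw s} = p {s} := by
  rw [smap, ProbabilityMeasure.map_apply _ _ (measurableSet_singleton _)]
  rw [← Set.image_singleton, sw_involutive.injective.preimage_image]

lemma smap_mem_gen {x y z : St} {K : Set ℝ} {p : PM St} (hp : p ∈ gen x y z K) :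
    smap p ∈ gen (sw x) (sw y) (sw z) K := by
  obtain ⟨t, ht, h⟩ := hp
  exact ⟨t, ht, by simpa only [smap_apply_singleton] using h⟩

lemma smap_mem_convexHullPM_gen {x y z : St} {K : Set ℝ} {p : PM St}
    (hp : p ∈ convexHullPM (gen x y z K)) :
    smap p ∈ convexHullPM (gen (sw x) (sw y) (sw z) K) := by
  refine convexHullPM_min (T := smap ⁻¹' convexHullPM (gen (sw x) (sw y) (sw z) K))
    (fun q hq => subset_convexHullPM _ (smap_mem_gen hq)) ?_ hp
  intro p₁ h₁ p₂ h₂ t ht r hr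
  exact pmConvex_convexHullPM _ _ h₁ _ h₂ t ht _ (hr.map measurable_sw)

lemma smap_mem_Gam {K : Set ℝ} {s : St} {p : PM St} (hp : p ∈ Gam K s) :
    smap p ∈ Gam K (sw s) := by
  cases s with
  | a => exact smap_mem_convexHullPM_gen (x := St.a) (y := St.b) (z := St.c) hp
  | b => exact smap_mem_convexHullPM_gen (x := St.b) (y := St.a) (z := St.c) hp
  | c =>
    change p = dirac St.c at hp
    rw [hp, smap_dirac]
    rfl

lemma Gam_sw (K : Set ℝ) (s : St) : Gam K (sw s) = smap '' Gam K s := by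
  apply subset_antisymm
  · intro p hp
    exact ⟨smap p, by simpa only [sw_involutive s] using smap_mem_Gam hp, smap_smap p⟩
  · rintro _ ⟨p, hp, rfl⟩
    exact smap_mem_Gam hp

lemma pay_sw (x y : St) : pay (sw x, sw y) = pay (x, y) := by
  simp [pay, sw_involutive.injective.eq_iff]

lemma pay_nonneg (z : St × St) : 0 ≤ pay z := by
  unfold pay; split <;> norm_num

lemma pay_le_one (z : St × St) : pay z ≤ 1 := by
  unfold pay; split <;> norm_num

lemma ShapleyEq.apply_sw {I J : Set ℝ} {lam : ℝ} {w : St × St → ℝ}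
    (h : ShapleyEq (Gam I) (Gam J) pay lam w) (hlam0 : 0 < lam) (hlam1 : lam ≤ 1) (x y : St) :
    w (sw x, sw y) = w (x, y) :=
  congrFun ((h.comp_prodMap measurable_sw measurable_sw (Gam_sw I) (Gam_sw J) pay_sw).unique h
    hlam0 hlam1) (x, y)

/-- The continuation payoff at `(a, b')` when player 1 leaves `a` with parameter `t` and
player 2 leaves `b'` with parameter `s`, after substituting `x = v(a,a') = v(b,b')`,
`y = v(a,b') = v(b,a')`, `z = v(c,a') = v(c,b')`, `v(a,c') = v(b,c') = 1` and `v(c,c') = 0`. -/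
def valAB (x y z t s : ℝ) : ℝ :=
  (1 - t - t ^ 2) * ((1 - s - s ^ 2) * y + s * x + s ^ 2)
    + t * ((1 - s - s ^ 2) * x + s * y + s ^ 2) + t ^ 2 * (1 - s ^ 2) * z

/-- What the Shapley equation says about `x = v_λ(a,a')`, `y = v_λ(a,b')` and `z = v_λ(c,a')`. -/
structure CounterexampleBounds (lam x y z : ℝ) : Prop where
  x_nonneg : 0 ≤ x
  x_le_one : x ≤ 1
  y_nonneg : 0 ≤ y
  y_le_one : y ≤ 1
  z_nonneg : 0 ≤ z
  z_le : z ≤ 16 * lam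
  ab_lower : ∃ s ∈ Icc (0 : ℝ) (1 / 4), lam + (1 - lam) * ((1 - s - s ^ 2) * y + s * x + s ^ 2) ≤ y
  ab_upper : ∀ s ∈ Icc (0 : ℝ) (1 / 4), ∃ t ∈ Icc (0 : ℝ) (1 / 4),
    y ≤ lam + (1 - lam) * valAB x y z t s
  aa_upper : ∃ t ∈ Icc (0 : ℝ) (1 / 4), x ≤ (1 - lam) * ((1 - t - t ^ 2) * x + t * y + t ^ 2 * z)

lemma mem_Gam_a_of_mem_gen {K : Set ℝ} {s : ℝ} (hs : s ∈ K) {q : PM St}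
    (hq : q ∈ gen St.a St.b St.c {s}) : q ∈ Gam K St.a :=
  subset_convexHullPM _ (gen_mono (singleton_subset_iff.mpr hs) hq)

lemma mem_Gam_b_of_mem_gen {K : Set ℝ} {s : ℝ} (hs : s ∈ K) {q : PM St}
    (hq : q ∈ gen St.b St.a St.c {s}) : q ∈ Gam K St.b :=
  subset_convexHullPM _ (gen_mono (singleton_subset_iff.mpr hs) hq)

lemma dirac_mem_Gam_a {K : Set ℝ} (h0 : (0 : ℝ) ∈ K) : dirac St.a ∈ Gam K St.a :=
  subset_convexHullPM _ (dirac_mem_gen (by decide) (by decide) h0)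

lemma Icc_quarter_subset : Icc (0 : ℝ) (1 / 4) ⊆ Icc 0 (1 / 2) :=
  Icc_subset_Icc le_rfl (by norm_num)

namespace ShapleyEq

variable {I J : Set ℝ} {lam : ℝ} {w : St × St → ℝ}

lemma cc_eq_zero (hsh : ShapleyEq (Gam I) (Gam J) pay lam w) (hlam0 : 0 < lam) :
    w (St.c, St.c) = 0 := by
  obtain ⟨p, rfl, q, rfl, he⟩ := hsh.exists_eq St.c St.c
  rw [iXY_dirac_dirac] at he
  simp only [pay, if_true] at he
  nlinarith

lemma ac_eq_one (hsh : ShapleyEq (Gam I) (Gam J) pay lam w) (hlam0 : 0 < lam)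
    (hlam1 : lam ≤ 1) (hI0 : (0 : ℝ) ∈ I) : w (St.a, St.c) = 1 := by
  have h := hsh.ge_of_isMinOn hlam1 (y := St.c) (dirac_mem_Gam_a hI0) rfl
    (isMinOn_singleton _ _)
  rw [iXY_dirac_dirac] at h
  have : pay (St.a, St.c) = 1 := rfl
  nlinarith [hsh.le_of_forall_le hlam0 hlam1 pay_le_one (St.a, St.c)]

variable (hsh : ShapleyEq (Gam I) (Gam (Icc 0 (1 / 4))) pay lam w) (hlam0 : 0 < lam)
  (hlam1 : lam ≤ 1)
include hsh hlam0 hlam1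

lemma ca_le : w (St.c, St.a) ≤ 16 * lam := by
  obtain ⟨q, hq⟩ := gen_singleton_nonempty (x := St.a) (y := St.b) (z := St.c) (by decide)
    (by decide) (by decide) (t := 1 / 4) (by norm_num) (by norm_num)
  have h := hsh.le_of_isMaxOn hlam1 (x := St.c) rfl (mem_Gam_a_of_mem_gen (by norm_num) hq)
    (isMaxOn_singleton _ _)
  have hcb : w (St.c, St.b) = w (St.c, St.a) := hsh.apply_sw hlam0 hlam1 St.c St.a
  rw [iXY_dirac_left, iPM_of_mem_gen_singleton (by decide) (by decide) (by decide) hq,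
    hsh.cc_eq_zero hlam0, hcb] at h
  have : pay (St.c, St.a) = 1 := rfl
  nlinarith [hsh.ge_of_forall_ge hlam0 hlam1 pay_nonneg (St.c, St.a)]

lemma ab_lower (hI0 : (0 : ℝ) ∈ I) : ∃ s ∈ Icc (0 : ℝ) (1 / 4),
    lam + (1 - lam) * ((1 - s - s ^ 2) * w (St.a, St.b) + s * w (St.a, St.a) + s ^ 2)
      ≤ w (St.a, St.b) := by
  obtain ⟨s, hs, q, hq, hmin⟩ := exists_isMinOn_iPM (x := St.b) (y := St.a) (z := St.c)
    (by decide) (by decide) (by decide) isCompact_Icc (nonempty_Icc.2 (by norm_num))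
    Icc_quarter_subset (fun y => w (St.a, y))
  have e : iXY w (dirac St.a) = iPM (fun y => w (St.a, y)) := funext (iXY_dirac_left w St.a)
  have h := hsh.ge_of_isMinOn hlam1 (dirac_mem_Gam_a hI0) (mem_Gam_b_of_mem_gen hs hq)
    (e ▸ hmin)
  rw [e, iPM_of_mem_gen_singleton (by decide) (by decide) (by decide) hq,
    hsh.ac_eq_one hlam0 hlam1 hI0] at h
  have hpay : pay (St.a, St.b) = 1 := rfl
  exact ⟨s, hs, by rw [hpay] at h; linarith⟩

lemma ab_upper (hIc : IsCompact I) (hI0 : (0 : ℝ) ∈ I) (hI : I ⊆ Icc 0 (1 / 4)) :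
    ∀ s ∈ Icc (0 : ℝ) (1 / 4), ∃ t ∈ Icc (0 : ℝ) (1 / 4), w (St.a, St.b) ≤
      lam + (1 - lam) * valAB (w (St.a, St.a)) (w (St.a, St.b)) (w (St.c, St.a)) t s := by
  intro s hs
  obtain ⟨q, hq⟩ := gen_singleton_nonempty (x := St.b) (y := St.a) (z := St.c) (by decide)
    (by decide) (by decide) hs.1 (by linarith [hs.2])
  obtain ⟨t, ht, p, hp, hmax⟩ := exists_isMaxOn_iPM (x := St.a) (y := St.b) (z := St.c)
    (by decide) (by decide) (by decide) hIc ⟨0, hI0⟩ (hI.trans Icc_quarter_subset)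
    (fun x => iPM (fun y => w (x, y)) q)
  have h := hsh.le_of_isMaxOn hlam1 (mem_Gam_a_of_mem_gen ht hp) (mem_Gam_b_of_mem_gen hs hq)
    hmax
  change w (St.a, St.b) ≤ lam * pay (St.a, St.b)
    + (1 - lam) * iPM (fun x => iPM (fun y => w (x, y)) q) p at h
  have hbb : w (St.b, St.b) = w (St.a, St.a) := hsh.apply_sw hlam0 hlam1 St.a St.a
  have hba : w (St.b, St.a) = w (St.a, St.b) := hsh.apply_sw hlam0 hlam1 St.a St.b
  have hbc : w (St.b, St.c) = w (St.a, St.c) := hsh.apply_sw hlam0 hlam1 St.a St.c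
  have hcb : w (St.c, St.b) = w (St.c, St.a) := hsh.apply_sw hlam0 hlam1 St.c St.a
  have hpay : pay (St.a, St.b) = 1 := rfl
  rw [iPM_of_mem_gen_singleton (by decide) (by decide) (by decide) hp] at h
  simp only [iPM_of_mem_gen_singleton (x := St.b) (y := St.a) (z := St.c) (by decide) (by decide)
    (by decide) hq, hbb, hba, hbc, hcb, hsh.ac_eq_one hlam0 hlam1 hI0,
    hsh.cc_eq_zero hlam0, hpay] at h
  refine ⟨t, hI ht, h.trans_eq ?_⟩
  simp only [valAB]
  ring

lemma aa_upper (hIc : IsCompact I) (hI0 : (0 : ℝ) ∈ I) (hI : I ⊆ Icc 0 (1 / 4)) :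
    ∃ t ∈ Icc (0 : ℝ) (1 / 4), w (St.a, St.a) ≤ (1 - lam) *
      ((1 - t - t ^ 2) * w (St.a, St.a) + t * w (St.a, St.b) + t ^ 2 * w (St.c, St.a)) := by
  obtain ⟨t, ht, p, hp, hmax⟩ := exists_isMaxOn_iPM (x := St.a) (y := St.b) (z := St.c)
    (by decide) (by decide) (by decide) hIc ⟨0, hI0⟩ (hI.trans Icc_quarter_subset)
    (fun x => w (x, St.a))
  have e : (fun p => iXY w p (dirac St.a)) = iPM (fun x => w (x, St.a)) :=
    funext fun p => iXY_dirac_right w p St.a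
  have h := hsh.le_of_isMaxOn hlam1 (mem_Gam_a_of_mem_gen ht hp)
    (dirac_mem_Gam_a (by norm_num)) (e ▸ hmax)
  rw [iXY_dirac_right] at h
  have hba : w (St.b, St.a) = w (St.a, St.b) := hsh.apply_sw hlam0 hlam1 St.a St.b
  have hpay : pay (St.a, St.a) = 0 := by simp [pay]
  simp only [iPM_of_mem_gen_singleton (x := St.a) (y := St.b) (z := St.c) (by decide)
    (by decide) (by decide) hp, hba, hpay] at h
  exact ⟨t, hI ht, by linarith⟩

lemma counterexampleBounds (hIc : IsCompact I) (hI0 : (0 : ℝ) ∈ I) (hI : I ⊆ Icc 0 (1 / 4)) :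
    CounterexampleBounds lam (w (St.a, St.a)) (w (St.a, St.b)) (w (St.c, St.a)) where
  x_nonneg := hsh.ge_of_forall_ge hlam0 hlam1 pay_nonneg _
  x_le_one := hsh.le_of_forall_le hlam0 hlam1 pay_le_one _
  y_nonneg := hsh.ge_of_forall_ge hlam0 hlam1 pay_nonneg _
  y_le_one := hsh.le_of_forall_le hlam0 hlam1 pay_le_one _
  z_nonneg := hsh.ge_of_forall_ge hlam0 hlam1 pay_nonneg _
  z_le := hsh.ca_le hlam0 hlam1
  ab_lower := hsh.ab_lower hlam0 hlam1 hI0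
  ab_upper := hsh.ab_upper hlam0 hlam1 hIc hI0 hI
  aa_upper := hsh.aa_upper hlam0 hlam1 hIc hI0 hI

end ShapleyEq

lemma four_mul_le_sq_of_le {lam a c d s : ℝ} (hlam : lam ≤ 1) (hc : 0 ≤ c)
    (h : a ≤ (1 - lam) * (s * d - s ^ 2 * c)) : 4 * c * a ≤ (1 - lam) * d ^ 2 := by
  have amgm : 4 * c * (s * d - s ^ 2 * c) ≤ d ^ 2 := by nlinarith [sq_nonneg (d - 2 * s * c)]
  calc 4 * c * a ≤ 4 * c * ((1 - lam) * (s * d - s ^ 2 * c)) :=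
        mul_le_mul_of_nonneg_left h (by linarith)
    _ = (1 - lam) * (4 * c * (s * d - s ^ 2 * c)) := by ring
    _ ≤ (1 - lam) * d ^ 2 := mul_le_mul_of_nonneg_left amgm (by linarith)

lemma sq_le_of_forall_le {lam c d : ℝ} (hlam0 : 0 ≤ lam) (hlam : lam ≤ 1 / 17)
    (hd : 0 ≤ d) (h : ∀ s ∈ Icc (0 : ℝ) (1 / 4), (1 - lam) * (s * d - s ^ 2 * c) ≤ lam * c) :
    (1 - lam) * d ^ 2 ≤ 4 * lam * c ^ 2 := by
  rcases le_or_gt d (c / 2) with hdc | hdc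
  · rcases hd.eq_or_lt with rfl | hd0
    · nlinarith
    have hc0 : 0 < c := by linarith
    -- the optimal `s = d / (2c)` is admissible
    have hs := h (d / (2 * c)) ⟨by positivity, by rw [div_le_iff₀ (by positivity)]; linarith⟩
    calc (1 - lam) * d ^ 2
        = 4 * c * ((1 - lam) * (d / (2 * c) * d - (d / (2 * c)) ^ 2 * c)) := by
          field_simp; ring
      _ ≤ 4 * c * (lam * c) := mul_le_mul_of_nonneg_left hs (by positivity)
      _ = 4 * lam * c ^ 2 := by ring
  · have hs := h (1 / 4) ⟨by norm_num, le_rfl⟩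
    nlinarith [mul_pos (by linarith : (0 : ℝ) < 1 - lam) (by linarith : 0 < d / 8 - c / 16),
      mul_nonneg hlam0 (by linarith : 0 ≤ 2 * d - c),
      mul_nonneg hd (by linarith : 0 ≤ 1 - 17 * lam)]

lemma valAB_le {x y z t s : ℝ} (hx : 0 ≤ x) (hy : 0 ≤ y) (hxy : x ≤ y) (hz0 : 0 ≤ z)
    (hz : z ≤ 11 / 16 * y + 7 / 4 * (y - x)) (hs : s ∈ Icc (0 : ℝ) (1 / 4))
    (ht : t ∈ Icc (0 : ℝ) (1 / 4)) :
    valAB x y z t s ≤ (1 - s - s ^ 2) * y + s * x + s ^ 2 := by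
  obtain ⟨hs0, hs4⟩ := hs
  obtain ⟨ht0, ht4⟩ := ht
  have htd := mul_nonneg ht0 (sub_nonneg.mpr hxy)
  have hA : 11 / 16 * y ≤ (1 - s - s ^ 2) * y + s * x + s ^ 2 := by
    have : 11 / 16 ≤ 1 - s - s ^ 2 := by nlinarith
    nlinarith [mul_le_mul_of_nonneg_right this hy, mul_nonneg hs0 hx]
  have h1 : 7 / 16 * (t * (y - x)) ≤ t * ((1 - 2 * s - s ^ 2) * (y - x)) := by
    have : 7 / 16 ≤ 1 - 2 * s - s ^ 2 := by nlinarith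
    nlinarith [mul_le_mul_of_nonneg_right this htd]
  have h2 : t ^ 2 * ((1 - s ^ 2) * z - ((1 - s - s ^ 2) * y + s * x + s ^ 2))
      ≤ t ^ 2 * (7 / 4 * (y - x)) :=
    mul_le_mul_of_nonneg_left (by nlinarith [mul_nonneg (sq_nonneg s) hz0]) (sq_nonneg t)
  have h3 : t ^ 2 * (7 / 4 * (y - x)) ≤ 7 / 16 * (t * (y - x)) := by nlinarith
  have e : valAB x y z t s = (1 - s - s ^ 2) * y + s * x + s ^ 2
      - t * ((1 - 2 * s - s ^ 2) * (y - x))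
      + t ^ 2 * ((1 - s ^ 2) * z - ((1 - s - s ^ 2) * y + s * x + s ^ 2)) := by
    simp only [valAB]; ring
  linarith

namespace CounterexampleBounds

variable {lam x y z : ℝ} (hb : CounterexampleBounds lam x y z) (hlam0 : 0 < lam)
  (hlam : lam ≤ 1 / 100)
include hb hlam0 hlam

lemma x_le_y : x ≤ y := by
  obtain ⟨s, ⟨hs0, -⟩, hs⟩ := hb.ab_lower
  by_contra! hyx
  nlinarith [mul_nonneg hs0 (sub_nonneg.mpr hyx.le), mul_nonneg (sq_nonneg s)
    (sub_nonneg.mpr hb.y_le_one), hb.x_le_one]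

lemma four_mul_sq_le : 4 * lam * (1 - y) ^ 2 ≤ (1 - lam) * (y - x) ^ 2 := by
  obtain ⟨s, -, hs⟩ := hb.ab_lower
  have := four_mul_le_sq_of_le (lam := lam) (a := lam * (1 - y)) (c := 1 - y) (d := y - x)
    (s := s) (by linarith)
    (sub_nonneg.mpr hb.y_le_one) (by linarith)
  linarith

lemma z_le_of_small : z ≤ 11 / 16 * y + 7 / 4 * (y - x) := by
  have hP := hb.four_mul_sq_le hlam0 hlam
  have hd := sub_nonneg.mpr (hb.x_le_y hlam0 hlam)
  -- otherwise `y` and `y - x` are both `O(λ)`, against `4λ(1 - y)² ≤ (y - x)²`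
  by_contra! h
  have hy : y ≤ 1 / 4 := by nlinarith [hb.z_le, hb.y_nonneg]
  have hd' : y - x ≤ 64 / 7 * lam := by nlinarith [hb.z_le, hb.y_nonneg]
  have h1 : 9 / 16 ≤ (1 - y) ^ 2 := by nlinarith
  have h2 : (y - x) ^ 2 ≤ (64 / 7 * lam) ^ 2 := pow_le_pow_left₀ hd hd' 2
  nlinarith [mul_le_mul_of_nonneg_left h1 (by positivity : (0 : ℝ) ≤ 4 * lam),
    mul_le_mul_of_nonneg_left hlam hlam0.le, mul_nonneg hlam0.le (sq_nonneg (y - x))]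

lemma ab_upper_of_small : ∀ s ∈ Icc (0 : ℝ) (1 / 4),
    (1 - lam) * (s * (y - x) - s ^ 2 * (1 - y)) ≤ lam * (1 - y) := by
  intro s hs
  obtain ⟨t, ht, hy⟩ := hb.ab_upper s hs
  have := valAB_le hb.x_nonneg hb.y_nonneg (hb.x_le_y hlam0 hlam) hb.z_nonneg
    (hb.z_le_of_small hlam0 hlam) hs ht
  nlinarith

lemma sq_eq : (1 - lam) * (y - x) ^ 2 = 4 * lam * (1 - y) ^ 2 :=
  le_antisymm (sq_le_of_forall_le hlam0.le (by linarith) (sub_nonneg.mpr (hb.x_le_y hlam0 hlam))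
    (hb.ab_upper_of_small hlam0 hlam)) (hb.four_mul_sq_le hlam0 hlam)

lemma mul_sub_le : x * (x - z) ≤ (1 - y) ^ 2 := by
  rcases le_or_gt x z with hxz | hxz
  · nlinarith [mul_nonneg hb.x_nonneg (sub_nonneg.mpr hxz)]
  obtain ⟨t, -, ht⟩ := hb.aa_upper
  have := four_mul_le_sq_of_le (lam := lam) (a := lam * x) (c := x - z) (d := y - x) (s := t)
    (by linarith) (by linarith) (by linarith)
  nlinarith [hb.sq_eq hlam0 hlam]

end CounterexampleBounds

lemma div_two_sqrt_eq {lam c d : ℝ} (h0 : 0 < lam) (h1 : lam < 1) (hd : 0 ≤ d) (hc : 0 ≤ c)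
    (h : (1 - lam) * d ^ 2 = 4 * lam * c ^ 2) : d / (2 * √lam) = c / √(1 - lam) := by
  have hs0 : 0 < √lam := Real.sqrt_pos.2 h0
  have hs1 : 0 < √(1 - lam) := Real.sqrt_pos.2 (by linarith)
  rw [div_eq_div_iff (by positivity) hs1.ne']
  refine (pow_left_inj₀ (by positivity) (by positivity) two_ne_zero).1 ?_
  rw [mul_pow, mul_pow, mul_pow, Real.sq_sqrt h0.le, Real.sq_sqrt (by linarith)]
  linarith

lemma tendsto_div_two_sqrt {lam c d : ℕ → ℝ} {L : ℝ} (hlam : Tendsto lam atTop (𝓝 0))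
    (hc : Tendsto c atTop (𝓝 L))
    (h : ∀ᶠ n in atTop,
      0 < lam n ∧ 0 ≤ d n ∧ 0 ≤ c n ∧ (1 - lam n) * d n ^ 2 = 4 * lam n * c n ^ 2) :
    Tendsto (fun n => d n / (2 * √(lam n))) atTop (𝓝 L) := by
  have hden : Tendsto (fun n => √(1 - lam n)) atTop (𝓝 1) := by
    simpa using ((tendsto_const_nhds (x := (1 : ℝ))).sub hlam).sqrt
  have hlim := hc.div hden one_ne_zero
  rw [div_one] at hlim
  refine hlim.congr' ?_
  filter_upwards [h, hlam.eventually (gt_mem_nhds one_pos)] with n ⟨h0, hd, hc, he⟩ h1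
  exact (div_two_sqrt_eq h0 h1 hd hc he).symm

theorem statement13_general
    (I : Set ℝ) (hIc : IsCompact I)
    (hImin : IsLeast I 0) (hImax : IsGreatest I (1 / 4))
    (lam : ℕ → ℝ) (hlam : ∀ n, lam n ∈ Set.Ioc (0 : ℝ) 1)
    (hlam0 : Filter.Tendsto lam Filter.atTop (nhds 0))
    (w : ℕ → St × St → ℝ)
    (hsh : ∀ n, ShapleyEq (Gam I) (Gam (Set.Icc 0 (1 / 4))) pay (lam n) (w n))
    (v : ℝ)
    (hx : Filter.Tendsto (fun n => w n (St.a, St.a)) Filter.atTop (nhds v))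
    (hy : Filter.Tendsto (fun n => w n (St.a, St.b)) Filter.atTop (nhds v)) :
    v ≤ 1 / 2 ∧
    Filter.Tendsto
      (fun n => (w n (St.a, St.b) - w n (St.a, St.a)) / (2 * Real.sqrt (lam n)))
      Filter.atTop (nhds (1 - v)) := by
  have hI : I ⊆ Icc 0 (1 / 4) := fun t ht => ⟨hImin.2 ht, hImax.2 ht⟩
  have hb n := (hsh n).counterexampleBounds (hlam n).1 (hlam n).2 hIc hImin.1 hI
  have hsmall : ∀ᶠ n in atTop, lam n ≤ 1 / 100 := hlam0.eventually (ge_mem_nhds (by norm_num))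
  have hc : Tendsto (fun n => 1 - w n (St.a, St.b)) atTop (𝓝 (1 - v)) :=
    tendsto_const_nhds.sub hy
  have hz : Tendsto (fun n => w n (St.c, St.a)) atTop (𝓝 0) :=
    squeeze_zero (fun n => (hb n).z_nonneg) (fun n => (hb n).z_le)
      (by simpa using hlam0.const_mul 16)
  constructor
  · have := le_of_tendsto_of_tendsto (hx.mul (hx.sub hz)) (hc.pow 2)
      (hsmall.mono fun n h => (hb n).mul_sub_le (hlam n).1 h)
    nlinarith
  · exact tendsto_div_two_sqrt hlam0 hc (hsmall.mono fun n h => ⟨(hlam n).1,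
      sub_nonneg.2 ((hb n).x_le_y (hlam n).1 h), sub_nonneg.2 (hb n).y_le_one,
      (hb n).sq_eq (hlam n).1 h⟩)

/-- with J = [0,1/4], min I = 0 and max I = 1/4, if along a vanishing
sequence of discount factors both x_lam = v_lam(a,a') and y_lam = v_lam(a,b') converge to
some v in [0,1], then v <= 1/2 and y_lam - x_lam is asymptotically 2 sqrt(lam) (1-v). -/
theorem statement13
    (I : Set ℝ) (hIc : IsCompact I) (hIsub : I ⊆ Set.Icc 0 (1 / 2))
    (hImin : IsLeast I 0) (hImax : IsGreatest I (1 / 4))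
    (lam : ℕ → ℝ) (hlam : ∀ n, lam n ∈ Set.Ioc (0 : ℝ) 1)
    (hlam0 : Filter.Tendsto lam Filter.atTop (nhds 0))
    (w : ℕ → St × St → ℝ)
    (hsh : ∀ n, ShapleyEq (Gam I) (Gam (Set.Icc 0 (1 / 4))) pay (lam n) (w n))
    (v : ℝ) (hv : v ∈ Set.Icc (0 : ℝ) 1)
    (hx : Filter.Tendsto (fun n => w n (St.a, St.a)) Filter.atTop (nhds v))
    (hy : Filter.Tendsto (fun n => w n (St.a, St.b)) Filter.atTop (nhds v)) :
    v ≤ 1 / 2 ∧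
    Filter.Tendsto
      (fun n => (w n (St.a, St.b) - w n (St.a, St.a)) / (2 * Real.sqrt (lam n)))
      Filter.atTop (nhds (1 - v)) :=
  statement13_general I hIc hImin hImax lam hlam hlam0 w hsh v hx hy

end GG
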